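/- arXiv:2311.07629 — 2 statements merged into one kernel-verified Lean document; each statement's English description precedes it below -/
import Mathlib

section
/- Let G be a d-regular simple graph on n vertices whose adjacency-matrix eigenvalues λ₁ ≥ λ₂ ≥ ⋯ ≥ λₙ satisfy 0 ≤ λ₂ ≤ √(d/2). Then (d + n·λ₂)·(d³ + n·λ₂³) ≥ (d·n − d² − n·λ₂²)². -/
/-!
The eigenvalues of the adjacency matrix `A` have power sums `tr A = 0`, `tr A² = nd` and
`tr A³ ≥ 0` (`A³` counts closed walks), and the largest one is `d`. For the other eigenvalues
`x_j ≤ λ₂`, Cauchy–Schwarz with the nonnegative weights `λ₂ - x_j` gives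
`(∑ (λ₂² - x_j²))² ≤ ∑ (λ₂ - x_j) · ∑ (λ₂ - x_j)(λ₂ + x_j)²`, and the three power sums turn
this into `(y + λ₂²)² ≤ (d + nλ₂)(d³ + nλ₂³)` with `y = dn - d² - nλ₂²`. If `y ≥ 0` this bounds
`y²`; otherwise `λ₂² ≤ d` gives `-d² ≤ y < 0`, so `y² ≤ d⁴ ≤ (d + nλ₂)(d³ + nλ₂³)`.
-/

open Finset Matrix

theorem Matrix.IsHermitian.trace_pow_eq_sum_eigenvalues_pow {𝕜 n : Type*} [RCLike 𝕜] [Fintype n]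
    [DecidableEq n] {A : Matrix n n 𝕜} (hA : A.IsHermitian) (k : ℕ) :
    (A ^ k).trace = ∑ i, (hA.eigenvalues i : 𝕜) ^ k := by
  conv_lhs => rw [hA.spectral_theorem, ← map_pow, Unitary.conjStarAlgAut_apply, trace_mul_cycle,
    Unitary.coe_star_mul_self, one_mul, diagonal_pow, trace_diagonal]
  simp

namespace SimpleGraph

variable {V : Type*} [Fintype V] [DecidableEq V] {G : SimpleGraph V} [DecidableRel G.Adj]

variable (G) in
theorem trace_adjMatrix_pow_nonneg {α : Type*} [Semiring α] [PartialOrder α]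
    [IsOrderedRing α] (k : ℕ) : 0 ≤ (G.adjMatrix α ^ k).trace :=
  sum_nonneg fun v _ => by rw [diag_apply, adjMatrix_pow_apply_eq_card_walk]; positivity

theorem IsRegularOfDegree.trace_adjMatrix_sq {α : Type*} [Semiring α] {d : ℕ}
    (h : G.IsRegularOfDegree d) : (G.adjMatrix α ^ 2).trace = Fintype.card V * d := by
  simp only [sq, trace, diag_apply, adjMatrix_mul_self_apply_self, h.degree_eq, sum_const,
    card_univ, nsmul_eq_mul]

theorem IsRegularOfDegree.mem_spectrum_adjMatrix {d : ℕ} (h : G.IsRegularOfDegree d)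
    [Nonempty V] : (d : ℝ) ∈ spectrum ℝ (G.adjMatrix ℝ) := by
  rw [← spectrum_toLin', ← Module.End.hasEigenvalue_iff_mem_spectrum]
  refine Module.End.hasEigenvalue_of_hasEigenvector (x := fun _ => 1) ⟨?_, ?_⟩
  · rw [Module.End.mem_eigenspace_iff, toLin'_apply]
    ext v
    simpa using adjMatrix_mulVec_const_apply_of_regular (α := ℝ) (a := 1) h (v := v)
  · exact Function.ne_iff.mpr ⟨Classical.arbitrary V, one_ne_zero⟩

theorem IsRegularOfDegree.abs_le_of_mem_spectrum_adjMatrix {d : ℕ} (h : G.IsRegularOfDegree d)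
    {μ : ℝ} (hμ : μ ∈ spectrum ℝ (G.adjMatrix ℝ)) : |μ| ≤ d := by
  rw [← spectrum_toLin', ← Module.End.hasEigenvalue_iff_mem_spectrum] at hμ
  obtain ⟨k, hk⟩ := eigenvalue_mem_ball hμ
  rw [sum_erase _ (by simp)] at hk
  simpa [adjMatrix_apply, apply_ite, sum_boole, Real.dist_eq, ← h k,
    ← card_neighborFinset_eq_degree, neighborFinset_eq_filter]
    using hk

end SimpleGraph

theorem Finset.sq_card_mul_sq_sub_sum_sq_le {R ι : Type*} [CommRing R] [LinearOrder R]
    [IsStrictOrderedRing R] (s : Finset ι) {x : ι → R} {L : R} (hx : ∀ j ∈ s, x j ≤ L) :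
    (#s * L ^ 2 - ∑ j ∈ s, x j ^ 2) ^ 2 ≤ (#s * L - ∑ j ∈ s, x j) *
      (#s * L ^ 3 + L ^ 2 * ∑ j ∈ s, x j - L * ∑ j ∈ s, x j ^ 2 - ∑ j ∈ s, x j ^ 3) := by
  have hCS : (∑ j ∈ s, (L - x j) * (L + x j)) ^ 2
      ≤ (∑ j ∈ s, (L - x j)) * ∑ j ∈ s, (L - x j) * (L + x j) ^ 2 :=
    sum_sq_le_sum_mul_sum_of_sq_le_mul s (fun j hj => sub_nonneg.2 (hx j hj))
      (fun j hj => mul_nonneg (sub_nonneg.2 (hx j hj)) (sq_nonneg _)) fun j _ => le_of_eq (by ring)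
  have h₂ (j : ι) : (L - x j) * (L + x j) = L ^ 2 - x j ^ 2 := by ring
  have h₃ (j : ι) : (L - x j) * (L + x j) ^ 2 = L ^ 3 + L ^ 2 * x j - L * x j ^ 2 - x j ^ 3 := by
    ring
  simpa only [h₂, h₃, sum_sub_distrib, sum_add_distrib, sum_const, nsmul_eq_mul, ← mul_sum]
    using hCS

theorem sq_le_mul_of_power_sums {ι : Type*} [Fintype ι] [DecidableEq ι] {x : ι → ℝ} {i₀ : ι}
    {d L : ℝ} (hx₀ : x i₀ = d) (hxL : ∀ j ≠ i₀, x j ≤ L) (hL : 0 ≤ L) (hLd : L ^ 2 ≤ d)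
    (h₁ : ∑ i, x i = 0) (h₂ : ∑ i, x i ^ 2 = Fintype.card ι * d) (h₃ : 0 ≤ ∑ i, x i ^ 3) :
    (d * Fintype.card ι - d ^ 2 - Fintype.card ι * L ^ 2) ^ 2
      ≤ (d + Fintype.card ι * L) * (d ^ 3 + Fintype.card ι * L ^ 3) := by
  set n : ℝ := (Fintype.card ι : ℝ)
  set s := univ.erase i₀
  have hs : (#s : ℝ) = n - 1 := by
    rw [card_erase_of_mem (mem_univ i₀), card_univ,
      Nat.cast_pred (Fintype.card_pos_iff.2 ⟨i₀⟩)]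
  have hm₁ : ∑ j ∈ s, x j = -d := by rw [sum_erase_eq_sub (mem_univ i₀), h₁, hx₀]; ring
  have hm₂ : ∑ j ∈ s, x j ^ 2 = n * d - d ^ 2 := by rw [sum_erase_eq_sub (mem_univ i₀), h₂, hx₀]
  have hm₃ : -d ^ 3 ≤ ∑ j ∈ s, x j ^ 3 := by rw [sum_erase_eq_sub (mem_univ i₀), hx₀]; linarith
  have key := s.sq_card_mul_sq_sub_sum_sq_le fun j hj => hxL j (ne_of_mem_erase hj)
  rw [hs, hm₁, hm₂] at key
  have hd : 0 ≤ d := (sq_nonneg L).trans hLd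
  have hn : 1 ≤ n := by rw [← sub_nonneg, ← hs]; positivity
  have hq : 0 ≤ n * d - d ^ 2 := hm₂ ▸ sum_nonneg fun _ _ => sq_nonneg _
  have hfactor : (n - 1) * L ^ 3 + L ^ 2 * -d - L * (n * d - d ^ 2) - ∑ j ∈ s, x j ^ 3
      ≤ d ^ 3 + n * L ^ 3 := by
    nlinarith [pow_nonneg hL 3, mul_nonneg hd (sq_nonneg L), mul_nonneg hL hq]
  have hkey : (d * n - d ^ 2 - n * L ^ 2 + L ^ 2) ^ 2 ≤ (d + n * L) * (d ^ 3 + n * L ^ 3) :=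
    calc (d * n - d ^ 2 - n * L ^ 2 + L ^ 2) ^ 2
        ≤ ((n - 1) * L - -d) * ((n - 1) * L ^ 3 + L ^ 2 * -d - L * (n * d - d ^ 2)
            - ∑ j ∈ s, x j ^ 3) := by linear_combination key
      _ ≤ ((n - 1) * L - -d) * (d ^ 3 + n * L ^ 3) :=
        mul_le_mul_of_nonneg_left hfactor (by nlinarith)
      _ ≤ (d + n * L) * (d ^ 3 + n * L ^ 3) :=
        mul_le_mul_of_nonneg_right (by linarith) (by positivity)
  rcases le_total 0 (d * n - d ^ 2 - n * L ^ 2) with hy | hy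
  · nlinarith [sq_nonneg L]
  · have hy' : (d * n - d ^ 2 - n * L ^ 2) ^ 2 ≤ (d ^ 2) ^ 2 :=
      sq_le_sq' (by nlinarith) (hy.trans (sq_nonneg d))
    have hnL : 0 ≤ n * L := by positivity
    nlinarith [mul_nonneg hnL (pow_nonneg hd 3), mul_nonneg hd (mul_nonneg hnL (sq_nonneg L)),
      mul_nonneg hnL (mul_nonneg hnL (sq_nonneg L))]

/-- Let `G` be a `d`-regular simple graph on `n ≥ 2` vertices whose
adjacency-matrix eigenvalues, listed in decreasing order as `μ`, satisfy
`0 ≤ λ₂ ≤ √(d/2)` where `λ₂ = μ 1`. Then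
`(d + n·λ₂)·(d³ + n·λ₂³) ≥ (d·n − d² − n·λ₂²)²`. -/
theorem stmt_8 (n d : ℕ) (hn : 2 ≤ n)
    (G : SimpleGraph (Fin n)) [DecidableRel G.Adj]
    (hreg : G.IsRegularOfDegree d)
    (hA : (G.adjMatrix ℝ).IsHermitian)
    (μ : Fin n → ℝ) (hμ : Antitone μ)
    (hperm : ∃ σ : Equiv.Perm (Fin n), μ = hA.eigenvalues ∘ σ)
    (hmu2_nonneg : 0 ≤ μ ⟨1, by omega⟩)
    (hmu2_le : μ ⟨1, by omega⟩ ≤ Real.sqrt ((d : ℝ) / 2)) :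
    ((d : ℝ) + n * μ ⟨1, by omega⟩) * ((d : ℝ) ^ 3 + n * μ ⟨1, by omega⟩ ^ 3)
      ≥ ((d : ℝ) * n - d ^ 2 - n * μ ⟨1, by omega⟩ ^ 2) ^ 2 := by
  obtain ⟨σ, hσ⟩ := hperm
  have : Nonempty (Fin n) := ⟨⟨0, by omega⟩⟩
  have hpow (k : ℕ) : ∑ i, μ i ^ k = (G.adjMatrix ℝ ^ k).trace := by
    rw [hσ, hA.trace_pow_eq_sum_eigenvalues_pow]
    exact Equiv.sum_comp σ (hA.eigenvalues · ^ k)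
  have hle (i : Fin n) : μ i ≤ d := hσ ▸ (le_abs_self _).trans
    (hreg.abs_le_of_mem_spectrum_adjMatrix (hA.eigenvalues_mem_spectrum_real (σ i)))
  have htop : μ ⟨0, by omega⟩ = d := by
    obtain ⟨i, hi⟩ := hA.spectrum_real_eq_range_eigenvalues ▸ hreg.mem_spectrum_adjMatrix
    refine le_antisymm (hle _) (hi ▸ ?_)
    simpa [hσ] using hμ (Fin.le_def.2 (Nat.zero_le (σ.symm i)) : ⟨0, by omega⟩ ≤ σ.symm i)
  have hLd : μ ⟨1, by omega⟩ ^ 2 ≤ d := by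
    have := (Real.le_sqrt hmu2_nonneg (by positivity)).1 hmu2_le
    linarith [(by positivity : (0 : ℝ) ≤ d)]
  have hsecond (j : Fin n) (hj : j ≠ ⟨0, by omega⟩) : μ j ≤ μ ⟨1, by omega⟩ :=
    hμ (Fin.le_def.2 (Nat.one_le_iff_ne_zero.2 fun h => hj (Fin.ext h)))
  simpa using sq_le_mul_of_power_sums htop hsecond hmu2_nonneg hLd
    (by simpa using (hpow 1).trans (by simp))
    (by simpa [hreg.trace_adjMatrix_sq] using hpow 2)
    ((hpow 3).symm ▸ G.trace_adjMatrix_pow_nonneg 3)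
end

section
/- Let G be a d-regular simple graph on n vertices with 1 ≤ d, let A be its adjacency matrix, let λ₂ ≥ 0 be the second largest eigenvalue of A, set p = d/n, α = p/(λ₂ + p) and β = 1/(λ₂ + p). Then the real symmetric matrix M = (1 − α)·I − β·A + α·J, where I is the n×n identity matrix and J is the n×n all-ones matrix, is positive semidefinite. -/
/-!
Write `λ₂` for the second eigenvalue and `p = d / n`. As `α = β p` and `1 - α = β λ₂`, the matrix
is `β • (λ₂ • 1 - A + p • J)` with `β > 0`. The all-ones vector `𝟙` is an eigenvector of
`λ₂ • 1 - A + p • J` with eigenvalue `λ₂ ≥ 0`, so it suffices to check positivity on `𝟙ᗮ`, where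
`J` vanishes: we need `yᵀ A y ≤ λ₂ ‖y‖²`. Expanding `y` in an orthonormal eigenbasis of `A`, only
an eigenvector with eigenvalue `> λ₂` could violate this, and there is at most one. All other
eigenvalues are then `< d` (the Laplacian `d • 1 - A` is positive semidefinite, so `d` bounds the
spectrum), so their eigenvectors are orthogonal to the eigenvector `𝟙` of eigenvalue `d`; hence
that one eigenvector is parallel to `𝟙` and orthogonal to `y`.
-/

open Matrix

namespace OrthonormalBasis

variable {ι κ : Type*} [Fintype ι] [Fintype κ] (b : OrthonormalBasis κ ℝ (EuclideanSpace ℝ ι))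

theorem dotProduct_eq_sum (x z : ι → ℝ) :
    x ⬝ᵥ z = ∑ k, (⇑(b k) ⬝ᵥ x) * (⇑(b k) ⬝ᵥ z) := by
  have h := b.sum_inner_mul_inner (WithLp.toLp 2 x) (WithLp.toLp 2 z)
  simp only [EuclideanSpace.inner_eq_star_dotProduct, star_trivial] at h
  rw [dotProduct_comm, ← h]
  exact Finset.sum_congr rfl fun k _ => by rw [dotProduct_comm z]

theorem dotProduct_eq_mul_of_forall_ne {i : κ} {u : ι → ℝ} (hu : ∀ j ≠ i, ⇑(b j) ⬝ᵥ u = 0)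
    (z : ι → ℝ) : u ⬝ᵥ z = (⇑(b i) ⬝ᵥ u) * (⇑(b i) ⬝ᵥ z) := by
  rw [b.dotProduct_eq_sum, Finset.sum_eq_single i (fun j _ hj => by rw [hu j hj, zero_mul])
    fun h => (h (Finset.mem_univ i)).elim]

end OrthonormalBasis

theorem Antitone.min_le_apply_one {β : Type*} [LinearOrder β] {n : ℕ} (hn : 1 < n)
    {f μ : Fin n → β} (hμ : Antitone μ) {σ : Equiv.Perm (Fin n)} (hσ : μ = f ∘ σ) {i j : Fin n}
    (hij : i ≠ j) : min (f i) (f j) ≤ μ ⟨1, hn⟩ := by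
  have hf : ∀ k, f k = μ (σ.symm k) := fun k => by simp [hσ]
  have one_le : ∀ k : Fin n, k ≠ ⟨0, by omega⟩ → (⟨1, hn⟩ : Fin n) ≤ k := fun k hk =>
    Fin.le_def.mpr (Nat.one_le_iff_ne_zero.mpr (Fin.val_ne_of_ne hk))
  rw [hf, hf, min_le_iff]
  by_cases hi : σ.symm i = ⟨0, by omega⟩
  · exact .inr (hμ (one_le _ fun hj => hij (σ.symm.injective (hi.trans hj.symm))))
  · exact .inl (hμ (one_le _ hi))

namespace Matrix

variable {ι : Type*} [Fintype ι]

theorem posSemidef_of_mulVec_eq_smul {N : Matrix ι ι ℝ} (hN : N.IsHermitian) {c : ℝ} (hc : 0 ≤ c)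
    {u : ι → ℝ} (hu : N *ᵥ u = c • u) (hperp : ∀ y, u ⬝ᵥ y = 0 → 0 ≤ y ⬝ᵥ (N *ᵥ y)) :
    N.PosSemidef := by
  refine .of_dotProduct_mulVec_nonneg hN fun x => ?_
  rw [star_trivial]
  set t := (u ⬝ᵥ x) / (u ⬝ᵥ u)
  set y := x - t • u
  have hy : u ⬝ᵥ y = 0 := by
    by_cases h0 : u = 0
    · simp [h0]
    · have : u ⬝ᵥ u ≠ 0 := fun h => h0 (dotProduct_self_eq_zero.mp h)
      simp only [y, t, dotProduct_sub, dotProduct_smul, smul_eq_mul]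
      field_simp
      ring
  have hNu : ∀ z, u ⬝ᵥ (N *ᵥ z) = c * (u ⬝ᵥ z) := fun z => by
    rw [dotProduct_mulVec, ← mulVec_transpose, ← conjTranspose_eq_transpose_of_trivial, hN.eq, hu,
      smul_dotProduct, smul_eq_mul]
  have hx : x = y + t • u := by simp [y]
  have hxNx : x ⬝ᵥ (N *ᵥ x) = y ⬝ᵥ (N *ᵥ y) + t ^ 2 * (c * (u ⬝ᵥ u)) := by
    rw [hx, mulVec_add, mulVec_smul, hu]
    simp only [dotProduct_add, add_dotProduct, dotProduct_smul, smul_dotProduct, smul_eq_mul,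
      hNu, hy, dotProduct_comm y u]
    ring
  have huu : 0 ≤ u ⬝ᵥ u := by simpa using dotProduct_star_self_nonneg u
  rw [hxNx]
  exact add_nonneg (hperp y hy) (by positivity)

theorem of_const_one_mulVec {m R : Type*} [NonAssocSemiring R] (y : ι → R) :
    of (fun (_ : m) (_ : ι) => (1 : R)) *ᵥ y = fun _ => 1 ⬝ᵥ y :=
  rfl

namespace IsHermitian

section Eigenbasis

variable [DecidableEq ι] {A : Matrix ι ι ℝ} (hA : A.IsHermitian)
include hA

theorem eigenvectorBasis_dotProduct_mulVec (i : ι) (z : ι → ℝ) :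
    ⇑(hA.eigenvectorBasis i) ⬝ᵥ (A *ᵥ z) = hA.eigenvalues i * (⇑(hA.eigenvectorBasis i) ⬝ᵥ z) := by
  rw [dotProduct_mulVec, ← mulVec_transpose, ← conjTranspose_eq_transpose_of_trivial, hA.eq,
    hA.mulVec_eigenvectorBasis, smul_dotProduct, smul_eq_mul]

theorem dotProduct_mulVec_eq_sum (x : ι → ℝ) :
    x ⬝ᵥ (A *ᵥ x) = ∑ i, hA.eigenvalues i * (⇑(hA.eigenvectorBasis i) ⬝ᵥ x) ^ 2 := by
  rw [hA.eigenvectorBasis.dotProduct_eq_sum]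
  exact Finset.sum_congr rfl fun i _ => by rw [eigenvectorBasis_dotProduct_mulVec]; ring

theorem dotProduct_mulVec_le_of_eigenvalues_le {c : ℝ} {x : ι → ℝ}
    (h : ∀ i, ⇑(hA.eigenvectorBasis i) ⬝ᵥ x ≠ 0 → hA.eigenvalues i ≤ c) :
    x ⬝ᵥ (A *ᵥ x) ≤ c * (x ⬝ᵥ x) := by
  rw [hA.dotProduct_mulVec_eq_sum, hA.eigenvectorBasis.dotProduct_eq_sum x x, Finset.mul_sum]
  refine Finset.sum_le_sum fun i _ => ?_
  by_cases hi : ⇑(hA.eigenvectorBasis i) ⬝ᵥ x = 0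
  · simp [hi]
  · rw [← sq]
    exact mul_le_mul_of_nonneg_right (h i hi) (sq_nonneg _)

theorem eigenvectorBasis_dotProduct_eq_zero {ρ : ℝ} {u : ι → ℝ} (hu : A *ᵥ u = ρ • u) {i : ι}
    (hi : hA.eigenvalues i ≠ ρ) : ⇑(hA.eigenvectorBasis i) ⬝ᵥ u = 0 := by
  have h := hA.eigenvectorBasis_dotProduct_mulVec i u
  rw [hu, dotProduct_smul, smul_eq_mul] at h
  exact (mul_eq_mul_right_iff.mp h.symm).resolve_left hi

theorem dotProduct_eigenvectorBasis_self (i : ι) :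
    ⇑(hA.eigenvectorBasis i) ⬝ᵥ ⇑(hA.eigenvectorBasis i) = 1 := by
  have h := real_inner_self_eq_norm_sq (hA.eigenvectorBasis i)
  rwa [hA.eigenvectorBasis.orthonormal.1 i, one_pow, EuclideanSpace.inner_eq_star_dotProduct,
    star_trivial] at h

theorem eigenvalues_le_of_posSemidef {ρ : ℝ} (h : (ρ • 1 - A).PosSemidef) (i : ι) :
    hA.eigenvalues i ≤ ρ := by
  have h0 := h.dotProduct_mulVec_nonneg (hA.eigenvectorBasis i)
  rw [star_trivial, sub_mulVec, smul_mulVec, one_mulVec, dotProduct_sub, dotProduct_smul,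
    hA.mulVec_eigenvectorBasis, dotProduct_smul, hA.dotProduct_eigenvectorBasis_self] at h0
  simpa using h0

end Eigenbasis

theorem dotProduct_mulVec_le_second_eigenvalue {n : ℕ} {A : Matrix (Fin n) (Fin n) ℝ}
    (hA : A.IsHermitian) (hn : 1 < n) {μ : Fin n → ℝ} (hμ : Antitone μ)
    {σ : Equiv.Perm (Fin n)} (hσ : μ = hA.eigenvalues ∘ σ) {ρ : ℝ} {u : Fin n → ℝ} (hu0 : u ≠ 0)
    (hu : A *ᵥ u = ρ • u) (hρ : ∀ i, hA.eigenvalues i ≤ ρ) {y : Fin n → ℝ} (hy : u ⬝ᵥ y = 0) :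
    y ⬝ᵥ (A *ᵥ y) ≤ μ ⟨1, hn⟩ * (y ⬝ᵥ y) := by
  set b := hA.eigenvectorBasis
  refine hA.dotProduct_mulVec_le_of_eigenvalues_le fun i hiy => ?_
  by_contra! hi
  have hb : ∀ j ≠ i, ⇑(b j) ⬝ᵥ u = 0 := fun j hj =>
    hA.eigenvectorBasis_dotProduct_eq_zero hu <| ne_of_lt <|
      calc hA.eigenvalues j ≤ μ ⟨1, hn⟩ :=
            (min_le_iff.mp (hμ.min_le_apply_one hn hσ hj)).resolve_right hi.not_ge
        _ < hA.eigenvalues i := hi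
        _ ≤ ρ := hρ i
  have hbu : ⇑(b i) ⬝ᵥ u ≠ 0 := fun h0 => hu0 <| dotProduct_self_eq_zero.mp <| by
    rw [b.dotProduct_eq_mul_of_forall_ne hb, h0, zero_mul]
  rw [b.dotProduct_eq_mul_of_forall_ne hb] at hy
  exact hiy ((mul_eq_zero.mp hy).resolve_left hbu)

end IsHermitian

end Matrix

namespace SimpleGraph.IsRegularOfDegree

variable {V : Type*} [Fintype V] {G : SimpleGraph V} [DecidableRel G.Adj] {d : ℕ}

theorem adjMatrix_mulVec_one {R : Type*} [NonAssocSemiring R] (hreg : G.IsRegularOfDegree d) :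
    G.adjMatrix R *ᵥ 1 = (d : R) • 1 := by
  funext v
  simpa using adjMatrix_mulVec_const_apply_of_regular (a := (1 : R)) hreg (v := v)

theorem lapMatrix_eq [DecidableEq V] {R : Type*} [Ring R] (hreg : G.IsRegularOfDegree d) :
    G.lapMatrix R = (d : R) • 1 - G.adjMatrix R := by
  rw [lapMatrix, degMatrix, show (fun v => (G.degree v : R)) = fun _ => (d : R) from
    funext fun v => by rw [hreg v], ← smul_one_eq_diagonal]

theorem eigenvalues_adjMatrix_le [DecidableEq V] (hreg : G.IsRegularOfDegree d)
    (hA : (G.adjMatrix ℝ).IsHermitian) (i : V) : hA.eigenvalues i ≤ d :=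
  hA.eigenvalues_le_of_posSemidef (hreg.lapMatrix_eq (R := ℝ) ▸ G.posSemidef_lapMatrix ℝ) i

end SimpleGraph.IsRegularOfDegree

theorem SimpleGraph.IsRegularOfDegree.posSemidef_smul_one_sub_adjMatrix_add {n d : ℕ}
    {G : SimpleGraph (Fin n)} [DecidableRel G.Adj] (hreg : G.IsRegularOfDegree d)
    (hA : (G.adjMatrix ℝ).IsHermitian) (hn : 1 < n) {μ : Fin n → ℝ} (hμ : Antitone μ)
    {σ : Equiv.Perm (Fin n)} (hσ : μ = hA.eigenvalues ∘ σ) (hμ1 : 0 ≤ μ ⟨1, hn⟩) :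
    (μ ⟨1, hn⟩ • 1 - G.adjMatrix ℝ + ((d : ℝ) / n) • of (fun _ _ => (1 : ℝ))).PosSemidef := by
  have : NeZero n := ⟨by omega⟩
  refine posSemidef_of_mulVec_eq_smul ?_ hμ1 (u := 1) ?_ fun y hy => ?_
  · exact ((isHermitian_one.smul (.all _)).sub hA).add
      ((IsHermitian.ext fun _ _ => by simp).smul (.all _))
  · rw [add_mulVec, sub_mulVec, smul_mulVec, smul_mulVec, one_mulVec, hreg.adjMatrix_mulVec_one,
      of_const_one_mulVec, one_dotProduct_one]
    ext i
    simp [Fintype.card_fin]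
  · have hAy := hA.dotProduct_mulVec_le_second_eigenvalue hn hμ hσ one_ne_zero
      hreg.adjMatrix_mulVec_one (hreg.eigenvalues_adjMatrix_le hA) hy
    rw [add_mulVec, sub_mulVec, smul_mulVec, smul_mulVec, one_mulVec, of_const_one_mulVec, hy,
      dotProduct_add, dotProduct_sub, dotProduct_smul, dotProduct_smul]
    simp only [dotProduct_zero', smul_eq_mul, mul_zero, add_zero]
    linarith

/-- Let `G` be a `d`-regular simple graph on `n ≥ 2` vertices with
`1 ≤ d`, let `A` be its adjacency matrix, let `λ₂ = μ 1 ≥ 0` be its second largest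
eigenvalue (where `μ` lists the eigenvalues in decreasing order), and set `p = d/n`,
`α = p/(λ₂ + p)`, `β = 1/(λ₂ + p)`. Then the matrix `M = (1 − α)·I − β·A + α·J`
(with `J` the all-ones matrix) is positive semidefinite. -/
theorem stmt_11 (n d : ℕ) (hn : 2 ≤ n) (hd : 1 ≤ d)
    (G : SimpleGraph (Fin n)) [DecidableRel G.Adj]
    (hreg : G.IsRegularOfDegree d)
    (hA : (G.adjMatrix ℝ).IsHermitian)
    (μ : Fin n → ℝ) (hμ : Antitone μ)
    (hperm : ∃ σ : Equiv.Perm (Fin n), μ = hA.eigenvalues ∘ σ)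
    (hmu2 : 0 ≤ μ ⟨1, by omega⟩)
    (p α β : ℝ)
    (hp : p = (d : ℝ) / n)
    (hα : α = p / (μ ⟨1, by omega⟩ + p))
    (hβ : β = 1 / (μ ⟨1, by omega⟩ + p)) :
    ((1 - α) • (1 : Matrix (Fin n) (Fin n) ℝ) - β • G.adjMatrix ℝ
        + α • Matrix.of (fun _ _ => (1 : ℝ))).PosSemidef := by
  obtain ⟨σ, hσ⟩ := hperm
  have hp0 : 0 < p := hp ▸ div_pos (by exact_mod_cast hd) (by positivity)
  have hD : 0 < μ ⟨1, by omega⟩ + p := add_pos_of_nonneg_of_pos hmu2 hp0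
  have hM : (1 - α) • (1 : Matrix (Fin n) (Fin n) ℝ) - β • G.adjMatrix ℝ
      + α • of (fun _ _ => (1 : ℝ)) =
      β • (μ ⟨1, by omega⟩ • 1 - G.adjMatrix ℝ + ((d : ℝ) / n) • of (fun _ _ => (1 : ℝ))) := by
    rw [← hp, smul_add, smul_sub, smul_smul, smul_smul, hα, hβ]
    congr 3
    · field_simp
      ring
    · field_simp
  rw [hM]
  exact (hreg.posSemidef_smul_one_sub_adjMatrix_add hA (by omega) hμ hσ hmu2).smul
    (hβ ▸ (one_div_pos.mpr hD).le)
end
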